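/- Suppose the l-th diagonal entry [A_{jk}]_{ll} is strictly positive for all users j, k and all streams l = 1,…,L_j, and let P_max > 0. Let F' be the set of power allocations p with p_{kl} ≥ 0 for all k, l, Σ_{k=1}^K Σ_{l=1}^{L_k} p_{kl} ≤ P_max, and SINR̄_k(p) ≥ γ_k for every k. If F' is nonempty and p* ∈ F' minimizes the total transmitted power Σ_{k=1}^K Σ_{l=1}^{L_k} p_{kl} over F', then every user's average SINR exactly meets its target: SINR̄_k(p*) = γ_k for every k = 1,…,K. -/

import Mathlib

open Matrix Finset

/-!
If some user's SINR strictly exceeded its target at a minimum-power allocation, scaling that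
user's powers down by `γ_k / SINR̄_k < 1` would bring its SINR exactly to the target, could only
lower the interference seen by every other user, and would strictly lower the total power,
contradicting minimality.
-/

noncomputable def Amat {K M : ℕ} {N L : Fin K → ℕ}
    (H : ∀ k : Fin K, Matrix (Fin M) (Fin (N k)) ℂ)
    (U : ∀ j : Fin K, Matrix (Fin M) (Fin (L j)) ℂ)
    (V : ∀ k : Fin K, Matrix (Fin (N k)) (Fin (L k)) ℂ)
    (j k : Fin K) : Matrix (Fin (L j)) (Fin (L j)) ℂ :=
  (U j)ᴴ * H k * V k * (V k)ᴴ * (H k)ᴴ * U j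

/-- The real diagonal entry `[A_{jk}]_{ll}`. -/
noncomputable def Adiag {K M : ℕ} {N L : Fin K → ℕ}
    (H : ∀ k : Fin K, Matrix (Fin M) (Fin (N k)) ℂ)
    (U : ∀ j : Fin K, Matrix (Fin M) (Fin (L j)) ℂ)
    (V : ∀ k : Fin K, Matrix (Fin (N k)) (Fin (L k)) ℂ)
    (j k : Fin K) (l : Fin (L j)) : ℝ :=
  (Amat H U V j k l l).re

/-- The average downlink SINR of user `k` under power allocation `p`. -/
noncomputable def avgSINR {K M : ℕ} {N L : Fin K → ℕ}
    (H : ∀ k : Fin K, Matrix (Fin M) (Fin (N k)) ℂ)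
    (U : ∀ j : Fin K, Matrix (Fin M) (Fin (L j)) ℂ)
    (V : ∀ k : Fin K, Matrix (Fin (N k)) (Fin (L k)) ℂ)
    (σsq : ℝ) (p : ∀ k : Fin K, Fin (L k) → ℝ) (k : Fin K) : ℝ :=
  (∑ l, p k l * Adiag H U V k k l) /
    ((∑ j ∈ univ.erase k, ∑ l, p j l * Adiag H U V j k l) + (L k : ℝ) * σsq)

noncomputable def signalPower {K M : ℕ} {N L : Fin K → ℕ}
    (H : ∀ k : Fin K, Matrix (Fin M) (Fin (N k)) ℂ)
    (U : ∀ j : Fin K, Matrix (Fin M) (Fin (L j)) ℂ)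
    (V : ∀ k : Fin K, Matrix (Fin (N k)) (Fin (L k)) ℂ)
    (p : ∀ k : Fin K, Fin (L k) → ℝ) (k : Fin K) : ℝ :=
  ∑ l, p k l * Adiag H U V k k l

noncomputable def interferencePower {K M : ℕ} {N L : Fin K → ℕ}
    (H : ∀ k : Fin K, Matrix (Fin M) (Fin (N k)) ℂ)
    (U : ∀ j : Fin K, Matrix (Fin M) (Fin (L j)) ℂ)
    (V : ∀ k : Fin K, Matrix (Fin (N k)) (Fin (L k)) ℂ)
    (p : ∀ k : Fin K, Fin (L k) → ℝ) (k : Fin K) : ℝ :=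
  ∑ j ∈ univ.erase k, ∑ l, p j l * Adiag H U V j k l

section

variable {K M : ℕ} {N L : Fin K → ℕ}
  {H : ∀ k : Fin K, Matrix (Fin M) (Fin (N k)) ℂ}
  {U : ∀ j : Fin K, Matrix (Fin M) (Fin (L j)) ℂ}
  {V : ∀ k : Fin K, Matrix (Fin (N k)) (Fin (L k)) ℂ}
  {σsq : ℝ} {p q : ∀ k : Fin K, Fin (L k) → ℝ}

open ComplexOrder in
theorem Adiag_nonneg (j k : Fin K) (l : Fin (L j)) : 0 ≤ Adiag H U V j k l := by
  set B := (U j)ᴴ * H k * V k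
  have hA : Amat H U V j k = B * Bᴴ := by
    simp only [Amat, B, conjTranspose_mul, conjTranspose_conjTranspose, Matrix.mul_assoc]
  exact (Complex.nonneg_iff.mp ((hA ▸ posSemidef_self_mul_conjTranspose B).diag_nonneg)).1

theorem avgSINR_eq_div (k : Fin K) :
    avgSINR H U V σsq p k =
      signalPower H U V p k / (interferencePower H U V p k + L k * σsq) :=
  rfl

theorem signalPower_nonneg (hp : 0 ≤ p) (k : Fin K) : 0 ≤ signalPower H U V p k :=
  sum_nonneg fun l _ => mul_nonneg (hp k l) (Adiag_nonneg k k l)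

theorem interferencePower_nonneg (hp : 0 ≤ p) (k : Fin K) :
    0 ≤ interferencePower H U V p k :=
  sum_nonneg fun j _ => sum_nonneg fun l _ => mul_nonneg (hp j l) (Adiag_nonneg j k l)

theorem interferencePower_mono (hqp : q ≤ p) (k : Fin K) :
    interferencePower H U V q k ≤ interferencePower H U V p k :=
  sum_le_sum fun j _ => sum_le_sum fun l _ =>
    mul_le_mul_of_nonneg_right (hqp j l) (Adiag_nonneg j k l)

theorem sinr_denominator_pos (hL : ∀ k, 1 ≤ L k) (hσ : 0 < σsq) (hp : 0 ≤ p) (k : Fin K) :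
    0 < interferencePower H U V p k + L k * σsq :=
  add_pos_of_nonneg_of_pos (interferencePower_nonneg hp k)
    (mul_pos (by exact_mod_cast hL k) hσ)

theorem avgSINR_le_avgSINR_of_le (hL : ∀ k, 1 ≤ L k) (hσ : 0 < σsq) (hq : 0 ≤ q)
    (hqp : q ≤ p) {k : Fin K} (hqk : q k = p k) :
    avgSINR H U V σsq p k ≤ avgSINR H U V σsq q k := by
  have hsignal : signalPower H U V q k = signalPower H U V p k := by
    simp only [signalPower, hqk]
  rw [avgSINR_eq_div, avgSINR_eq_div, hsignal]
  exact div_le_div_of_nonneg_left (signalPower_nonneg (hq.trans hqp) k)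
    (sinr_denominator_pos hL hσ hq k) (by gcongr; exact interferencePower_mono hqp k)

theorem interferencePower_update_self (k : Fin K) (v : Fin (L k) → ℝ) :
    interferencePower H U V (Function.update p k v) k = interferencePower H U V p k :=
  sum_congr rfl fun j hj => by rw [Function.update_of_ne (ne_of_mem_erase hj)]

theorem avgSINR_update_smul_self (k : Fin K) (t : ℝ) :
    avgSINR H U V σsq (Function.update p k (t • p k)) k = t * avgSINR H U V σsq p k := by
  have hsignal : signalPower H U V (Function.update p k (t • p k)) k =
      t * signalPower H U V p k := by
    simp only [signalPower, Function.update_self, Pi.smul_apply, smul_eq_mul, mul_sum, mul_assoc]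
  rw [avgSINR_eq_div, avgSINR_eq_div, interferencePower_update_self, hsignal, mul_div_assoc]

theorem exists_pos_of_avgSINR_ne_zero (hp : 0 ≤ p) {k : Fin K}
    (h : avgSINR H U V σsq p k ≠ 0) : ∃ l, 0 < p k l := by
  have hsignal : signalPower H U V p k ≠ 0 := fun h0 => h (by rw [avgSINR_eq_div, h0, zero_div])
  obtain ⟨l, -, hl⟩ := exists_ne_zero_of_sum_ne_zero hsignal
  exact ⟨l, (hp k l).lt_of_ne' (left_ne_zero_of_mul hl)⟩

end

theorem sum_sum_lt_of_le_of_lt {ι R : Type*} {κ : ι → Type*}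
    [Fintype ι] [∀ i, Fintype (κ i)]
    [AddCommMonoid R] [PartialOrder R] [IsOrderedCancelAddMonoid R] {p q : ∀ i, κ i → R}
    (hqp : q ≤ p) {i : ι} {a : κ i} (hlt : q i a < p i a) :
    ∑ i, ∑ a, q i a < ∑ i, ∑ a, p i a :=
  sum_lt_sum (fun j _ => sum_le_sum fun b _ => hqp j b)
    ⟨i, mem_univ i, sum_lt_sum (fun b _ => hqp i b) ⟨a, mem_univ a, hlt⟩⟩

theorem sinr_targets_met_with_equality_of_min_power_general {K M : ℕ} {N L : Fin K → ℕ}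
    (hL : ∀ k, 1 ≤ L k)
    (H : ∀ k : Fin K, Matrix (Fin M) (Fin (N k)) ℂ)
    (U : ∀ j : Fin K, Matrix (Fin M) (Fin (L j)) ℂ)
    (V : ∀ k : Fin K, Matrix (Fin (N k)) (Fin (L k)) ℂ)
    (σsq : ℝ) (hσ : 0 < σsq)
    (γ : Fin K → ℝ) (hγ : ∀ k, 0 < γ k)
    (Pmax : ℝ)
    (pstar : ∀ k : Fin K, Fin (L k) → ℝ)
    (hstar_nonneg : ∀ k l, 0 ≤ pstar k l)
    (hstar_sum : ∑ k, ∑ l, pstar k l ≤ Pmax)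
    (hstar_sinr : ∀ k, γ k ≤ avgSINR H U V σsq pstar k)
    (hopt : ∀ p : ∀ k : Fin K, Fin (L k) → ℝ, (∀ k l, 0 ≤ p k l) →
      (∑ k, ∑ l, p k l ≤ Pmax) → (∀ k, γ k ≤ avgSINR H U V σsq p k) →
      ∑ k, ∑ l, pstar k l ≤ ∑ k, ∑ l, p k l) :
    ∀ k : Fin K, avgSINR H U V σsq pstar k = γ k := by
  intro k
  refine le_antisymm (not_lt.mp fun hlt => ?_) (hstar_sinr k)
  have hsinr_pos : 0 < avgSINR H U V σsq pstar k := (hγ k).trans hlt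
  set t := γ k / avgSINR H U V σsq pstar k
  have ht_nonneg : 0 ≤ t := div_nonneg (hγ k).le hsinr_pos.le
  have ht_lt_one : t < 1 := (div_lt_one hsinr_pos).mpr hlt
  set p := Function.update pstar k (t • pstar k)
  have hpstar : 0 ≤ pstar := fun j l => hstar_nonneg j l
  have hp_le : p ≤ pstar := update_le_self_iff.mpr fun l =>
    mul_le_of_le_one_left (hpstar k l) ht_lt_one.le
  have hp_nonneg : 0 ≤ p :=
    le_update_iff.mpr ⟨smul_nonneg ht_nonneg (hpstar k), fun j _ => hpstar j⟩
  have hp_sinr : ∀ j, γ j ≤ avgSINR H U V σsq p j := by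
    intro j
    rcases eq_or_ne j k with rfl | hjk
    · rw [avgSINR_update_smul_self, div_mul_cancel₀ _ hsinr_pos.ne']
    · exact (hstar_sinr j).trans
        (avgSINR_le_avgSINR_of_le hL hσ hp_nonneg hp_le (Function.update_of_ne hjk _ _))
  obtain ⟨l, hl⟩ := exists_pos_of_avgSINR_ne_zero hpstar hsinr_pos.ne'
  have hp_total : ∑ j, ∑ l, p j l < ∑ j, ∑ l, pstar j l :=
    sum_sum_lt_of_le_of_lt hp_le (a := l) (by
      simp only [p, Function.update_self, Pi.smul_apply, smul_eq_mul]
      exact mul_lt_of_lt_one_left hl ht_lt_one)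
  exact (hopt p hp_nonneg (hp_total.le.trans hstar_sum) hp_sinr).not_gt hp_total

/-- targets met with equality at the optimum of Problem Pp. -/
theorem sinr_targets_met_with_equality_of_min_power {K M : ℕ} {N L : Fin K → ℕ}
    (hK : 0 < K) (hL : ∀ k, 1 ≤ L k)
    (H : ∀ k : Fin K, Matrix (Fin M) (Fin (N k)) ℂ)
    (U : ∀ j : Fin K, Matrix (Fin M) (Fin (L j)) ℂ)
    (V : ∀ k : Fin K, Matrix (Fin (N k)) (Fin (L k)) ℂ)
    (σsq : ℝ) (hσ : 0 < σsq)
    (γ : Fin K → ℝ) (hγ : ∀ k, 0 < γ k)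
    (hA : ∀ j k : Fin K, ∀ l : Fin (L j), 0 < Adiag H U V j k l)
    (Pmax : ℝ) (hP : 0 < Pmax)
    (pstar : ∀ k : Fin K, Fin (L k) → ℝ)
    (hstar_nonneg : ∀ k l, 0 ≤ pstar k l)
    (hstar_sum : ∑ k, ∑ l, pstar k l ≤ Pmax)
    (hstar_sinr : ∀ k, γ k ≤ avgSINR H U V σsq pstar k)
    (hopt : ∀ p : ∀ k : Fin K, Fin (L k) → ℝ, (∀ k l, 0 ≤ p k l) →
      (∑ k, ∑ l, p k l ≤ Pmax) → (∀ k, γ k ≤ avgSINR H U V σsq p k) →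
      ∑ k, ∑ l, pstar k l ≤ ∑ k, ∑ l, p k l) :
    ∀ k : Fin K, avgSINR H U V σsq pstar k = γ k :=
  sinr_targets_met_with_equality_of_min_power_general hL H U V σsq hσ γ hγ Pmax pstar hstar_nonneg
    hstar_sum hstar_sinr hopt
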